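/- There exists a function f : [0.01,10] × [0.01,10] → ℝ that is not jointly convex, but whose Stackelberg reduction Φ(M) = f(M, w*(M)) with w*(M) = argmin_{w ∈ [0.01,10]} f(M,w) is strongly convex. Concretely, f(M,w) = (Mw − 1)² + 0.1 M² is not convex on [0.01,10]² (its Hessian at (0.5,0.5) has a negative eigenvalue), while Φ(M) = (M·min(10, 1/M) − 1)² + 0.1 M² is 0.05-strongly convex on [0.01,10]. -/

import Mathlib

/-!
`f(M, w) = (Mw - 1)² + 0.1 M²` has Hessian `[[0.7, -1], [-1, 0.5]]` at `(0.5, 0.5)`, which is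
indefinite, so `f` is not convex. Minimising over `w ≤ 10` clamps `Mw` to `min (10 M) 1`, so the
reduced objective is `Φ(M) = (max 0 (1 - 10 M))² + 0.1 M²`: the square of a nonnegative convex
function plus a quadratic, hence `0.2`-strongly convex.
-/

open Set

lemma StrongConvexOn.congr {E : Type*} [NormedAddCommGroup E] [NormedSpace ℝ E] {s : Set E}
    {m : ℝ} {f g : E → ℝ} (hf : StrongConvexOn s m f) (hfg : EqOn f g s) :
    StrongConvexOn s m g := by
  refine ⟨hf.1, fun x hx y hy a b ha hb hab => ?_⟩
  rw [← hfg hx, ← hfg hy, ← hfg (hf.1 hx hy ha hb hab)]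
  exact hf.2 hx hy ha hb hab

lemma StrongConvexOn.add_sq_of_convexOn {s : Set ℝ} {g : ℝ → ℝ} {c m : ℝ}
    (hg : ConvexOn ℝ s g) (hm : m ≤ 2 * c) :
    StrongConvexOn s m fun x => g x + c * x ^ 2 := by
  rw [strongConvexOn_iff_convex]
  have hsq : ConvexOn ℝ s fun x : ℝ => (c - m / 2) * x ^ 2 :=
    (Even.convexOn_pow even_two).subset (subset_univ s) hg.1 |>.smul (by linarith)
  refine (hg.add hsq).congr fun x _ => ?_
  simp only [Pi.add_apply, Real.norm_eq_abs, sq_abs]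
  ring

lemma convexOn_sq_max_zero_one_sub_mul (b : ℝ) :
    ConvexOn ℝ univ fun x : ℝ => max 0 (1 - b * x) ^ 2 := by
  have hlin : ConvexOn ℝ univ fun x : ℝ => 1 - b * x :=
    (((-b) • LinearMap.id : ℝ →ₗ[ℝ] ℝ).convexOn convex_univ).add_const 1 |>.congr fun x _ => by
      simp only [LinearMap.coe_smul, LinearMap.id_coe, neg_smul, Pi.add_apply, Pi.neg_apply,
        Pi.smul_apply, id_eq, smul_eq_mul]
      ring
  exact ((convexOn_const 0 convex_univ).sup hlin).pow (fun x _ => le_sup_left) 2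

lemma isMinOn_mul_sub_one_sq_add_const {M : ℝ} (hM : 0 < M) (b c : ℝ) :
    IsMinOn (fun w : ℝ => (M * w - 1) ^ 2 + c) (Iic b) (min b (1 / M)) := by
  intro w (hw : w ≤ b)
  change (M * min b (1 / M) - 1) ^ 2 + c ≤ (M * w - 1) ^ 2 + c
  rcases min_cases b (1 / M) with ⟨hmin, hb⟩ | ⟨hmin, -⟩
  · have hMb : M * b ≤ 1 := by rwa [le_div_iff₀' hM] at hb
    have hMw : M * w ≤ M * b := mul_le_mul_of_nonneg_left hw hM.le
    rw [hmin]
    nlinarith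
  · rw [hmin, mul_one_div_cancel hM.ne', sub_self]
    nlinarith [sq_nonneg (M * w - 1)]

lemma mul_min_one_div_sub_one_sq {M : ℝ} (hM : 0 < M) (b : ℝ) :
    (M * min b (1 / M) - 1) ^ 2 = max 0 (1 - b * M) ^ 2 := by
  rw [mul_min_of_nonneg _ _ hM.le, mul_one_div_cancel hM.ne', ← neg_sq, neg_sub,
    ← max_sub_sub_left, sub_self, max_comm, mul_comm]

/-- The witnesses lie on the diagonal, the direction of negative curvature at `(0.5, 0.5)`. -/
lemma not_convexOn_mul_sub_one_sq_add_sq :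
    ¬ ConvexOn ℝ ((Icc (0.01 : ℝ) 10) ×ˢ (Icc (0.01 : ℝ) 10))
      (fun p : ℝ × ℝ => (p.1 * p.2 - 1) ^ 2 + 0.1 * p.1 ^ 2) := by
  intro h
  have h₁ : ((0.4 : ℝ), (0.4 : ℝ)) ∈ (Icc (0.01 : ℝ) 10) ×ˢ (Icc (0.01 : ℝ) 10) := by norm_num
  have h₂ : ((0.6 : ℝ), (0.6 : ℝ)) ∈ (Icc (0.01 : ℝ) 10) ×ˢ (Icc (0.01 : ℝ) 10) := by norm_num
  have hmid := h.2 h₁ h₂ (by norm_num : (0 : ℝ) ≤ 1 / 2) (by norm_num : (0 : ℝ) ≤ 1 / 2)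
    (by norm_num)
  simp only [Prod.smul_mk, smul_eq_mul, Prod.mk_add_mk] at hmid
  norm_num at hmid

/-- convexification via Stackelberg reduction. The non-convex objective
`f(M,w) = (Mw − 1)² + 0.1 M²` on `[0.01,10]²` has best response `w*(M) = min(10, 1/M)`,
and the reduced objective `Φ(M) = (M·min(10,1/M) − 1)² + 0.1 M²` is `0.05`-strongly
convex on `[0.01,10]`, even though `f` is not jointly convex. -/
theorem stmt5 :
    (¬ ConvexOn ℝ ((Set.Icc (0.01 : ℝ) 10) ×ˢ (Set.Icc (0.01 : ℝ) 10))
      (fun p : ℝ × ℝ => (p.1 * p.2 - 1) ^ 2 + 0.1 * p.1 ^ 2)) ∧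
    (∀ M ∈ Set.Icc (0.01 : ℝ) 10,
      IsMinOn (fun w : ℝ => (M * w - 1) ^ 2 + 0.1 * M ^ 2) (Set.Icc (0.01 : ℝ) 10)
        (min 10 (1 / M))) ∧
    StrongConvexOn (Set.Icc (0.01 : ℝ) 10) 0.05
      (fun M : ℝ => (M * min 10 (1 / M) - 1) ^ 2 + 0.1 * M ^ 2) := by
  have hpos : ∀ M ∈ Icc (0.01 : ℝ) 10, 0 < M := fun M hM => by linarith [hM.1]
  refine ⟨not_convexOn_mul_sub_one_sq_add_sq, fun M hM => ?_, ?_⟩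
  · exact (isMinOn_mul_sub_one_sq_add_const (hpos M hM) 10 _).on_subset Icc_subset_Iic_self
  · have hconv := (convexOn_sq_max_zero_one_sub_mul 10).subset (subset_univ (Icc (0.01 : ℝ) 10))
      (convex_Icc _ _)
    refine (StrongConvexOn.add_sq_of_convexOn hconv (c := 0.1) (by norm_num)).congr fun M hM => ?_
    simp only [mul_min_one_div_sub_one_sq (hpos M hM)]
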